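/- Let T be a rigid object in C, let f : X → Y be a map in C, and complete f to a triangle Σ⁻¹Z →h X →f Y →g Z. Then: (a) h factors through an object of ΣT^⊥ if and only if Hom_C(T, f) : Hom_C(T, X) → Hom_C(T, Y) is a monomorphism of End_C(T)^op-modules; (b) g factors through an object of ΣT^⊥ if and only if Hom_C(T, f) is an epimorphism of End_C(T)^op-modules. -/

import Mathlib

/-!
Common setup: `C` is a Hom-finite, Krull-Schmidt (= idempotent complete, given
Hom-finiteness over a field), `k`-linear triangulated category with suspension
functor `Σ = shiftFunctor C (1 : ℤ)`, and `T` is a rigid object of `C`.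
-/

noncomputable section

open CategoryTheory CategoryTheory.Limits CategoryTheory.Pretriangulated

universe v u

namespace PaperBM

/-- The left action of `End X` on `unop X ⟶ Y` for `X : Cᵒᵖ` (as in the older Mathlib's
`Preadditive.moduleEndLeft`), by `r • f = r.unop ≫ f`. -/
instance mulActionEndLeftOp {C : Type u} [Category.{v} C] {X : Cᵒᵖ} {Y : C} :
    MulAction (End X) (Opposite.unop X ⟶ Y) where
  smul r f := r.unop ≫ f
  one_smul := Category.id_comp
  mul_smul _ _ _ := Category.assoc _ _ _

instance moduleEndLeftOp {C : Type u} [Category.{v} C] [Preadditive C] {X : Cᵒᵖ} {Y : C} :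
    Module (End X) (Opposite.unop X ⟶ Y) where
  smul_add _ _ _ := Preadditive.comp_add _ _ _ _ _ _
  smul_zero _ := Limits.comp_zero
  add_smul _ _ _ := Preadditive.add_comp _ _ _ _ _ _
  zero_smul _ := Limits.zero_comp

/-- The older Mathlib's `preadditiveCoyonedaObj` (for `X : Cᵒᵖ`, valued in `End X`-modules). -/
def preadditiveCoyonedaObjOld {C : Type u} [Category.{v} C] [Preadditive C] (X : Cᵒᵖ) :
    C ⥤ ModuleCat.{v} (End X) where
  obj Y := ModuleCat.of _ (Opposite.unop X ⟶ Y)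
  map f := ModuleCat.ofHom
    { toFun := fun g => g ≫ f
      map_add' := fun _ _ => Preadditive.add_comp _ _ _ _ _ _
      map_smul' := fun _ _ => Category.assoc _ _ _ }

variable {C : Type u} [Category.{v} C] [Preadditive C] [HasZeroObject C]
  [HasShift C ℤ] [∀ n : ℤ, (shiftFunctor C n).Additive] [Pretriangulated C]
  [HasFiniteBiproducts C]

/-- `X` lies in `add T`: it is a direct summand of a finite direct sum of copies of `T`. -/
def memAdd (T X : C) : Prop :=
  ∃ (n : ℕ) (s : X ⟶ ⨁ (fun _ : Fin n => T)) (r : (⨁ fun _ : Fin n => T) ⟶ X), s ≫ r = 𝟙 X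

/-- `T` is rigid: `Hom_C(T, ΣT) = 0`. -/
def IsRigidObj (T : C) : Prop := ∀ f : T ⟶ (shiftFunctor C (1 : ℤ)).obj T, f = 0

/-- `Y ∈ T^⊥`, i.e. `Hom_C(X, ΣY) = 0` for all `X ∈ add T`. -/
def memTperp (T Y : C) : Prop :=
  ∀ (X : C), memAdd T X → ∀ f : X ⟶ (shiftFunctor C (1 : ℤ)).obj Y, f = 0

/-- `Y ∈ ⊥T`, i.e. `Hom_C(Y, ΣX) = 0` for all `X ∈ add T`. -/
def memPerpT (T Y : C) : Prop :=
  ∀ (X : C), memAdd T X → ∀ f : Y ⟶ (shiftFunctor C (1 : ℤ)).obj X, f = 0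

/-- `Y ∈ ΣT^⊥`, the image of `T^⊥` under the suspension `Σ`. -/
def memSigmaTperp (T Y : C) : Prop :=
  ∃ Z : C, memTperp T Z ∧ Nonempty (Y ≅ (shiftFunctor C (1 : ℤ)).obj Z)

/-- The map `f` factors through an object belonging to the class `P` of objects. -/
def FactorsThru (P : C → Prop) {A B : C} (f : A ⟶ B) : Prop :=
  ∃ (Z : C) (g : A ⟶ Z) (h : Z ⟶ B), P Z ∧ g ≫ h = f

/-- The class `S̃` of maps `f : X ⟶ Y` such that in a completion
`Σ⁻¹Z →h X →f Y →g Z` of `f` to a triangle (where `A` plays the role of `Σ⁻¹Z`,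
so that `Z = ΣA`), both `g` and `h` factor through an object of `ΣT^⊥`. -/
def Stilde (T : C) : MorphismProperty C := fun X Y f =>
  ∃ (A : C) (h : A ⟶ X) (g : Y ⟶ (shiftFunctor C (1 : ℤ)).obj A),
    (Triangle.mk h f g ∈ distTriang C) ∧
    FactorsThru (memSigmaTperp T) g ∧ FactorsThru (memSigmaTperp T) h

/-- The class `S` of maps `f : X ⟶ Y` such that in a completion
`Σ⁻¹Z →h X →f Y →g Z` of `f` to a triangle (where `A` plays the role of `Σ⁻¹Z`,
so that `Z = ΣA`), `g` factors through an object of `ΣT^⊥` and `Σ⁻¹Z ∈ ΣT^⊥`. -/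
def Sclass (T : C) : MorphismProperty C := fun X Y f =>
  ∃ (A : C) (h : A ⟶ X) (g : Y ⟶ (shiftFunctor C (1 : ℤ)).obj A),
    (Triangle.mk h f g ∈ distTriang C) ∧
    FactorsThru (memSigmaTperp T) g ∧ memSigmaTperp T A

/-- `X ∈ C(T)`: there is a triangle `T₁ → T₀ → X → ΣT₁` with `T₀, T₁ ∈ add T`. -/
def memCT (T X : C) : Prop :=
  ∃ (T₁ T₀ : C) (a : T₁ ⟶ T₀) (b : T₀ ⟶ X) (c : X ⟶ (shiftFunctor C (1 : ℤ)).obj T₁),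
    memAdd T T₁ ∧ memAdd T T₀ ∧ (Triangle.mk a b c ∈ distTriang C)

/-- `f : X₀ ⟶ Y` is a right `P`-approximation of `Y`. -/
def IsRightApprox (P : C → Prop) {X₀ Y : C} (f : X₀ ⟶ Y) : Prop :=
  P X₀ ∧ ∀ (W : C), P W → ∀ g : W ⟶ Y, ∃ g' : W ⟶ X₀, g' ≫ f = g

/-- `f : Y ⟶ X₀` is a left `P`-approximation of `Y`. -/
def IsLeftApprox (P : C → Prop) {Y X₀ : C} (f : Y ⟶ X₀) : Prop :=
  P X₀ ∧ ∀ (W : C), P W → ∀ g : Y ⟶ W, ∃ g' : X₀ ⟶ W, f ≫ g' = g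

/-- The map `f : X₀ ⟶ Y` is right minimal. -/
def IsRightMinimal {X₀ Y : C} (f : X₀ ⟶ Y) : Prop :=
  ∀ g : X₀ ⟶ X₀, g ≫ f = f → IsIso g

/-- The functor `H = Hom_C(T, -) : C ⥤ Mod End_C(T)ᵒᵖ`.  Here, with Mathlib's
conventions, the endomorphism ring `End (Opposite.op T)` of `T` viewed in `Cᵒᵖ` plays
the role of `End_C(T)ᵒᵖ`, so that each `Hom_C(T, X)` is a left module over it. -/
abbrev homFunctor (T : C) : C ⥤ ModuleCat.{v} (End (Opposite.op T)) :=
  preadditiveCoyonedaObjOld (Opposite.op T)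

/-- The predicate on `End_C(T)ᵒᵖ`-modules of being finite-dimensional (equivalently,
since `End_C(T)` is a finite-dimensional algebra, finitely generated). -/
abbrev isFinDim (T : C) : ModuleCat.{v} (End (Opposite.op T)) → Prop :=
  fun M => Module.Finite (End (Opposite.op T)) M

/-- The category `mod End_C(T)ᵒᵖ` of finite-dimensional `End_C(T)ᵒᵖ`-modules. -/
abbrev fdMod (T : C) := ObjectProperty.FullSubcategory (isFinDim T)

/-- The ideal relation on `C(T)` of maps factoring through an object of `ΣT^⊥`. -/
def homRelCT (T : C) : HomRel (ObjectProperty.FullSubcategory (memCT T)) :=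
  fun A B f g => FactorsThru (memSigmaTperp T) (((f - g).hom : A.obj ⟶ B.obj))

/-- The ideal relation on `C(T)` of maps factoring through an object of `add ΣT`. -/
def homRelCTadd (T : C) : HomRel (ObjectProperty.FullSubcategory (memCT T)) :=
  fun A B f g => FactorsThru (memAdd ((shiftFunctor C (1 : ℤ)).obj T)) (((f - g).hom : A.obj ⟶ B.obj))

/-- The ideal relation on `C` of maps factoring through an object of `add ΣT`. -/
def homRelAdd (T : C) : HomRel C :=
  fun A B f g => FactorsThru (memAdd ((shiftFunctor C (1 : ℤ)).obj T)) (f - g)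

end PaperBM

open PaperBM

/-!
Since `T` is rigid, a map `u : Z ⟶ V` factors through `ΣT^⊥` exactly when `Hom_C(T, u) = 0`:
if so, complete a right `add T`-approximation `T₀ ⟶ Z` (which exists by Hom-finiteness) to a
triangle `T₀ ⟶ Z ⟶ B ⟶ ΣT₀`; then `u` factors through `B`, and `Hom_C(T, B) = 0` because
`Hom_C(T, ΣT₀) = 0` and every map `T ⟶ Z` lifts to `T₀`. The theorem then follows from the
long exact sequence `Hom_C(T, A) ⟶ Hom_C(T, X) ⟶ Hom_C(T, Y) ⟶ Hom_C(T, ΣA)`: `Hom_C(T, f)` is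
injective iff `Hom_C(T, h) = 0`, and surjective iff `Hom_C(T, g) = 0`.
-/

namespace PaperBM

section Triangulated

variable {C : Type u} [Category.{v} C] [Preadditive C] [HasZeroObject C]
  [HasShift C ℤ] [∀ n : ℤ, (shiftFunctor C n).Additive] [Pretriangulated C]

lemma mono_homFunctor_map_mor₂_iff (T : C) {tri : Triangle C} (htri : tri ∈ distTriang C) :
    Mono ((homFunctor T).map tri.mor₂) ↔ ∀ φ : T ⟶ tri.obj₁, φ ≫ tri.mor₁ = 0 := by
  rw [ModuleCat.mono_iff_injective, injective_iff_map_eq_zero]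
  constructor
  · intro hinj φ
    apply hinj
    change (φ ≫ tri.mor₁) ≫ tri.mor₂ = 0
    rw [Category.assoc, comp_distTriang_mor_zero₁₂ _ htri, comp_zero]
  · intro hmor₁ (a : T ⟶ tri.obj₂) (ha : a ≫ tri.mor₂ = 0)
    obtain ⟨φ, rfl⟩ := Triangle.coyoneda_exact₂ _ htri a ha
    exact hmor₁ φ

lemma epi_homFunctor_map_mor₂_iff (T : C) {tri : Triangle C} (htri : tri ∈ distTriang C) :
    Epi ((homFunctor T).map tri.mor₂) ↔ ∀ ψ : T ⟶ tri.obj₃, ψ ≫ tri.mor₃ = 0 := by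
  rw [ModuleCat.epi_iff_surjective]
  constructor
  · intro hsurj ψ
    obtain ⟨(φ : T ⟶ tri.obj₂), hφ : φ ≫ tri.mor₂ = ψ⟩ := hsurj ψ
    rw [← hφ, Category.assoc, comp_distTriang_mor_zero₂₃ _ htri, comp_zero]
  · intro hmor₃ (ψ : T ⟶ tri.obj₃)
    obtain ⟨φ, hφ⟩ := Triangle.coyoneda_exact₃ _ htri ψ (hmor₃ ψ)
    exact ⟨φ, hφ.symm⟩

end Triangulated

section Rigid

variable {C : Type u} [Category.{v} C] [Preadditive C] [HasFiniteBiproducts C]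

lemma memAdd_self (T : C) : memAdd T T :=
  ⟨1, biproduct.lift fun _ => 𝟙 T, biproduct.desc fun _ => 𝟙 T, by simp [biproduct.lift_desc]⟩

lemma memAdd.hom_eq_zero {T B W : C} (hW : memAdd T W) (hT : ∀ v : T ⟶ B, v = 0)
    (u : W ⟶ B) : u = 0 := by
  obtain ⟨n, s, r, hsr⟩ := hW
  have hr : r ≫ u = 0 := biproduct.hom_ext' _ _ fun i => by
    simpa using hT (biproduct.ι (fun _ : Fin n => T) i ≫ r ≫ u)
  rw [← Category.id_comp u, ← hsr, Category.assoc, hr, comp_zero]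

lemma exists_biproduct_hom_lifting (k : Type*) [Field k] [Linear k C]
    [∀ X Y : C, FiniteDimensional k (X ⟶ Y)] (T Z : C) :
    ∃ (n : ℕ) (α : (⨁ fun _ : Fin n => T) ⟶ Z), ∀ φ : T ⟶ Z, ∃ ψ, ψ ≫ α = φ := by
  let b := Module.finBasis k (T ⟶ Z)
  refine ⟨_, biproduct.desc fun i => b i, fun φ => ⟨biproduct.lift fun i => b.repr φ i • 𝟙 T, ?_⟩⟩
  simpa only [biproduct.lift_desc, Linear.smul_comp, Category.id_comp] using b.sum_repr φ

variable [HasShift C ℤ]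

lemma memSigmaTperp.hom_eq_zero {T W : C} (hW : memSigmaTperp T W) (v : T ⟶ W) : v = 0 := by
  obtain ⟨Z, hZ, ⟨e⟩⟩ := hW
  rw [← cancel_mono e.hom, zero_comp]
  exact hZ T (memAdd_self T) _

lemma FactorsThru.comp_eq_zero {T Z V : C} {u : Z ⟶ V} (hu : FactorsThru (memSigmaTperp T) u)
    (φ : T ⟶ Z) : φ ≫ u = 0 := by
  obtain ⟨W, a, b, hW, rfl⟩ := hu
  rw [← Category.assoc, hW.hom_eq_zero (φ ≫ a), zero_comp]

lemma memSigmaTperp_of_forall_hom_eq_zero {T B : C} (hB : ∀ v : T ⟶ B, v = 0) :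
    memSigmaTperp T B := by
  let e := (shiftFunctorCompIsoId C (-1 : ℤ) (1 : ℤ) (by norm_num)).app B
  refine ⟨(shiftFunctor C (-1 : ℤ)).obj B, fun W hW u => ?_, ⟨e.symm⟩⟩
  rw [← cancel_mono e.hom, zero_comp]
  exact hW.hom_eq_zero hB _

variable [∀ n : ℤ, (shiftFunctor C n).Additive]

lemma IsRigidObj.hom_shift_biproduct_eq_zero {T : C} (hT : IsRigidObj T) {n : ℕ}
    (w : T ⟶ (shiftFunctor C (1 : ℤ)).obj (⨁ fun _ : Fin n => T)) : w = 0 := by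
  rw [← cancel_mono ((shiftFunctor C (1 : ℤ)).mapBiproduct fun _ : Fin n => T).hom, zero_comp]
  exact biproduct.hom_ext _ _ fun _ => by rw [zero_comp]; exact hT _

variable [HasZeroObject C] [Pretriangulated C]

lemma factorsThru_memSigmaTperp_of_comp_eq_zero (k : Type*) [Field k] [Linear k C]
    [∀ X Y : C, FiniteDimensional k (X ⟶ Y)] {T : C} (hT : IsRigidObj T) {Z V : C}
    (u : Z ⟶ V) (hu : ∀ φ : T ⟶ Z, φ ≫ u = 0) : FactorsThru (memSigmaTperp T) u := by
  obtain ⟨n, α, hα⟩ := exists_biproduct_hom_lifting k T Z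
  obtain ⟨B, β, γ, hB⟩ := distinguished_cocone_triangle α
  have hBperp : memSigmaTperp T B := memSigmaTperp_of_forall_hom_eq_zero fun v => by
    obtain ⟨(ρ : T ⟶ Z), hρ : v = ρ ≫ β⟩ :=
      Triangle.coyoneda_exact₃ _ hB v (hT.hom_shift_biproduct_eq_zero _)
    obtain ⟨σ, rfl⟩ := hα ρ
    have hαβ : α ≫ β = 0 := comp_distTriang_mor_zero₁₂ _ hB
    rw [hρ, Category.assoc, hαβ, comp_zero]
  have hαu : α ≫ u = 0 := biproduct.hom_ext' _ _ fun i => by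
    rw [← Category.assoc, hu, comp_zero]
  obtain ⟨u', hu'⟩ := Triangle.yoneda_exact₂ _ hB u hαu
  exact ⟨B, β, u', hBperp, hu'.symm⟩

lemma factorsThru_memSigmaTperp_iff (k : Type*) [Field k] [Linear k C]
    [∀ X Y : C, FiniteDimensional k (X ⟶ Y)] {T : C} (hT : IsRigidObj T) {Z V : C}
    (u : Z ⟶ V) : FactorsThru (memSigmaTperp T) u ↔ ∀ φ : T ⟶ Z, φ ≫ u = 0 :=
  ⟨FactorsThru.comp_eq_zero, factorsThru_memSigmaTperp_of_comp_eq_zero k hT u⟩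

end Rigid

end PaperBM

/-- Given a completion `Σ⁻¹Z →h X →f Y →g Z` of `f` to a triangle (`A` plays the role
of `Σ⁻¹Z`): (a) `h` factors through an object of `ΣT^⊥` iff `Hom_C(T, f)` is a
monomorphism of `End_C(T)ᵒᵖ`-modules; (b) `g` factors through an object of `ΣT^⊥`
iff `Hom_C(T, f)` is an epimorphism of `End_C(T)ᵒᵖ`-modules. -/
theorem statement_7 {C : Type u} [Category.{v} C] [Preadditive C] [HasZeroObject C]
    [HasShift C ℤ] [∀ n : ℤ, (shiftFunctor C n).Additive] [Pretriangulated C]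
    [HasFiniteBiproducts C]
    {k : Type*} [Field k] [CategoryTheory.Linear k C]
    [∀ X Y : C, FiniteDimensional k (X ⟶ Y)] [IsIdempotentComplete C]
    (T : C) (hT : IsRigidObj T) {X Y : C} (f : X ⟶ Y)
    (A : C) (h : A ⟶ X) (g : Y ⟶ (shiftFunctor C (1 : ℤ)).obj A)
    (htri : Triangle.mk h f g ∈ distTriang C) :
    (FactorsThru (memSigmaTperp T) h ↔ Mono ((homFunctor T).map f)) ∧
    (FactorsThru (memSigmaTperp T) g ↔ Epi ((homFunctor T).map f)) := by
  rw [factorsThru_memSigmaTperp_iff k hT, factorsThru_memSigmaTperp_iff k hT]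
  exact ⟨(mono_homFunctor_map_mor₂_iff T htri).symm, (epi_homFunctor_map_mor₂_iff T htri).symm⟩
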